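/- Let b ∈ ℝ and consider the holomorphic section ξ ↦ (ξ, −b·i·ξ) of the space of oriented lines (the line congruence generated by rotation of the unit sphere about the x³-axis). Then for every ξ ∈ ℂ and every u ∈ ℂ, the neutral Kähler metric evaluated on the tangent vector (u, −b·i·u) to this section satisfies q_{(ξ, −biξ)}(u, −b·i·u) = 4b·(1−|ξ|²)·|u|²/(1+|ξ|²)³. In particular the induced metric is positive definite for b > 0 on |ξ| < 1, and is totally null exactly on the equator |ξ| = 1. -/

import Mathlib

open Complex ComplexConjugate

/-- The neutral Kähler metric on the space `𝕋 ≅ ℂ²` of oriented lines, as a real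
quadratic form on the tangent vector `(u,v)` at the point `(ξ,η)`. -/
noncomputable def q (ξ η : ℂ) (u v : ℂ) : ℝ :=
  -4 * (v * conj u).im / (1 + normSq ξ) ^ 2 -
    8 * (ξ * conj η).im * normSq u / (1 + normSq ξ) ^ 3

lemma Complex.one_add_normSq_pos (z : ℂ) : 0 < 1 + normSq z :=
  add_pos_of_pos_of_nonneg one_pos (normSq_nonneg z)

lemma Complex.im_mul_mul_conj (c z : ℂ) : (c * z * conj z).im = c.im * normSq z := by
  rw [mul_assoc, mul_conj, im_mul_ofReal]

/-- On the section `η = c ξ` the two terms of `q` combine through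
`(1 + |ξ|²) - 2|ξ|² = 1 - |ξ|²`. -/
lemma q_mul_section (c ξ u : ℂ) :
    q ξ (c * ξ) u (c * u) = -4 * c.im * (1 - normSq ξ) * normSq u / (1 + normSq ξ) ^ 3 := by
  have hξ : (ξ * conj (c * ξ)).im = -c.im * normSq ξ := by
    rw [map_mul, mul_left_comm, ← mul_assoc, im_mul_mul_conj, conj_im]
  have := (one_add_normSq_pos ξ).ne'
  rw [q, im_mul_mul_conj, hξ]
  field_simp
  ring

lemma q_rotation_section (b : ℝ) (ξ u : ℂ) :
    q ξ (-(b : ℂ) * I * ξ) u (-(b : ℂ) * I * u) =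
      4 * b * (1 - ‖ξ‖ ^ 2) * normSq u / (1 + normSq ξ) ^ 3 := by
  rw [q_mul_section, Complex.sq_norm]
  simp only [neg_mul, neg_im, mul_im, ofReal_re, I_im, ofReal_im, I_re, mul_zero, add_zero,
    mul_one]
  ring

/-- on the holomorphic section `ξ ↦ (ξ, −biξ)`, the induced metric is
`q = 4b(1−|ξ|²)|u|²/(1+|ξ|²)³`; in particular for `b > 0` it is positive definite
on `|ξ| < 1` and totally null exactly on the equator `|ξ| = 1`. -/
theorem holomorphic_section_metric (b : ℝ) :
    (∀ (ξ u : ℂ),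
      q ξ (-(b : ℂ) * Complex.I * ξ) u (-(b : ℂ) * Complex.I * u) =
        4 * b * (1 - normSq ξ) * normSq u / (1 + normSq ξ) ^ 3) ∧
    (0 < b → ∀ ξ : ℂ, ‖ξ‖ < 1 → ∀ u : ℂ, u ≠ 0 →
      0 < q ξ (-(b : ℂ) * Complex.I * ξ) u (-(b : ℂ) * Complex.I * u)) ∧
    (0 < b → ∀ ξ : ℂ,
      ((∀ u : ℂ, q ξ (-(b : ℂ) * Complex.I * ξ) u (-(b : ℂ) * Complex.I * u) = 0) ↔
        ‖ξ‖ = 1)) := by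
  refine ⟨fun ξ u => by rw [q_rotation_section, Complex.sq_norm], fun hb ξ hξ u hu => ?_,
    fun hb ξ => ?_⟩
  · have hξ' : 0 < 1 - ‖ξ‖ ^ 2 := sub_pos.2 (pow_lt_one₀ (norm_nonneg ξ) hξ two_ne_zero)
    rw [q_rotation_section]
    exact div_pos (mul_pos (by positivity) (normSq_pos.2 hu)) (pow_pos (one_add_normSq_pos ξ) 3)
  · simp only [q_rotation_section, div_eq_zero_iff, (pow_pos (one_add_normSq_pos ξ) 3).ne',
      or_false, mul_eq_zero, four_ne_zero, hb.ne', false_or, sub_eq_zero, eq_comm (a := (1 : ℝ)),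
      pow_eq_one_iff_of_nonneg (norm_nonneg ξ) two_ne_zero]
    exact ⟨fun h => (h 1).resolve_right (by simp), fun h _ => Or.inl h⟩
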